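/- Let m ≥ 3 and n ∈ ℕ. Then B_n(c_1, c_2, …, c_n) = n! · p'_m(n), where c_j = (j-1)! · σ'_m(j), σ'_m(j) is the sum of divisors of j congruent to 0, 1, or m-1 mod m, p'_m(n) is the number of partitions of n into parts congruent to 0, 1, or m-1 mod m, and B_n is the n-th complete Bell polynomial. -/

import Mathlib

/-- Partial (exponential) Bell polynomials, via the standard recurrence
`B_{n+1,k+1} = ∑_{i=0}^{n} C(n,i) x_{i+1} B_{n-i,k}`. -/
def bellPartial (x : ℕ → ℚ) : ℕ → ℕ → ℚ
  | 0, 0 => 1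
  | 0, _ + 1 => 0
  | _ + 1, 0 => 0
  | n + 1, k + 1 =>
      ∑ i ∈ Finset.range (n + 1), (n.choose i : ℚ) * x (i + 1) * bellPartial x (n - i) k
  termination_by n _ => n
  decreasing_by omega

/-- The `n`-th complete Bell polynomial `B_n = ∑_{k=1}^{n} B_{n,k}` (with `B_0 = 1`). -/
def bellComplete (x : ℕ → ℚ) (n : ℕ) : ℚ :=
  if n = 0 then 1 else ∑ k ∈ Finset.Icc 1 n, bellPartial x n k

/-- `σ'_m(n)`: the sum of divisors of `n` congruent to 0, 1, or m-1 (mod m). -/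
def sigma' (m n : ℕ) : ℕ :=
  ∑ d ∈ n.divisors, if d % m = 0 ∨ d % m = 1 ∨ d % m = m - 1 then d else 0

/-- Generalized `(m+2)`-gonal number `P_{m+2,k} = k(mk-(m-2))/2` as an integer. -/
def polyZ (m : ℕ) (k : ℤ) : ℤ := k * ((m : ℤ) * k - ((m : ℤ) - 2)) / 2

/-- Generalized `(m+2)`-gonal number `Q_{m+2,k} = k(mk+(m-2))/2` as an integer. -/
def polyQZ (m : ℕ) (k : ℤ) : ℤ := k * ((m : ℤ) * k + ((m : ℤ) - 2)) / 2

/-- Number of partitions of `n` all of whose parts satisfy `P`. -/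
def restrictedPartitionCount (P : ℕ → Prop) [DecidablePred P] (n : ℕ) : ℕ :=
  Fintype.card {p : Nat.Partition n // ∀ i ∈ p.parts, P i}

/-- `p'_m(n)`: the number of partitions of `n` into parts ≡ 0, 1, or m-1 (mod m). -/
def pm (m n : ℕ) : ℕ :=
  restrictedPartitionCount (fun i => i % m = 0 ∨ i % m = 1 ∨ i % m = m - 1) n

/-!
The complete Bell polynomials satisfy `B_{n+1} = ∑ C(n,i) x_{i+1} B_{n-i}`, so for
`x_j = (j-1)! s_j` the numbers `B_n / n!` are the solution of the ordinary recurrence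
`n a_n = ∑_{j=1}^n s_j a_{n-j}` with `a_0 = 1`. For any set `P` of allowed parts, the restricted
partition numbers satisfy this recurrence with `s_j = ∑_{d ∣ j, d ∈ P} d`: summing the parts
of all partitions of `n` gives `n p_P(n) = ∑_d d ∑_λ m_d(λ)`, and since the partitions of `n`
with at least `k` parts equal to `d` correspond to the partitions of `n - dk`, this equals
`∑_{d,k} d p_P(n - dk) = ∑_j s_j p_P(n - j)`.
-/

open Finset Nat

lemma bellPartial_zero_right (x : ℕ → ℚ) (n : ℕ) :
    bellPartial x n 0 = if n = 0 then 1 else 0 := by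
  cases n <;> simp [bellPartial]

lemma bellPartial_eq_zero_of_lt (x : ℕ → ℚ) {n k : ℕ} (h : n < k) :
    bellPartial x n k = 0 := by
  induction n using Nat.strong_induction_on generalizing k with
  | _ n ih =>
    match n, k with
    | 0, k + 1 => simp [bellPartial]
    | n + 1, k + 1 =>
      rw [bellPartial]
      exact sum_eq_zero fun i _ => by rw [ih (n - i) (by omega) (by omega), mul_zero]

lemma sum_range_bellPartial (x : ℕ → ℚ) {n N : ℕ} (h : n ≤ N) :
    ∑ k ∈ range (N + 1), bellPartial x n k = bellComplete x n := by
  rcases Nat.eq_zero_or_pos n with rfl | hn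
  · rw [sum_range_succ', sum_eq_zero fun k _ => bellPartial_eq_zero_of_lt x k.succ_pos]
    simp [bellPartial_zero_right, bellComplete]
  · rw [bellComplete, if_neg hn.ne', range_eq_Ico, sum_eq_sum_Ico_succ_bot (by omega),
      bellPartial_zero_right, if_neg hn.ne', zero_add, Ico_add_one_right_eq_Icc]
    refine (sum_subset (Icc_subset_Icc_right h) fun k hk hk' => ?_).symm
    simp only [mem_Icc] at hk hk'
    exact bellPartial_eq_zero_of_lt x (by omega)

lemma bellComplete_succ (x : ℕ → ℚ) (n : ℕ) :
    bellComplete x (n + 1) =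
      ∑ i ∈ range (n + 1), (n.choose i : ℚ) * x (i + 1) * bellComplete x (n - i) := by
  rw [← sum_range_bellPartial x le_rfl, sum_range_succ', bellPartial_zero_right,
    if_neg n.succ_ne_zero, add_zero]
  simp only [bellPartial]
  rw [sum_comm]
  refine sum_congr rfl fun i _ => ?_
  rw [← mul_sum, sum_range_bellPartial x (Nat.sub_le n i)]

theorem bellComplete_eq_factorial_mul {s a : ℕ → ℚ} (h0 : a 0 = 1)
    (hrec : ∀ n : ℕ, n * a n = ∑ j ∈ Ioc 0 n, s j * a (n - j)) (n : ℕ) :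
    bellComplete (fun j => (j - 1)! * s j) n = n ! * a n := by
  induction n using Nat.strong_induction_on with
  | _ n ih =>
    match n with
    | 0 => simp [bellComplete, h0]
    | n + 1 =>
      have hrec' : (n + 1 : ℚ) * a (n + 1) = ∑ i ∈ range (n + 1), s (i + 1) * a (n - i) := by
        have h := hrec (n + 1)
        rw [← Ico_add_one_add_one_eq_Ioc, ← sum_Ico_add', ← range_eq_Ico] at h
        simp only [Nat.add_sub_add_right] at h
        exact_mod_cast h
      calc bellComplete (fun j => (j - 1)! * s j) (n + 1)
          = ∑ i ∈ range (n + 1), n ! * (s (i + 1) * a (n - i)) := by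
            rw [bellComplete_succ]
            refine sum_congr rfl fun i hi => ?_
            have hi : i ≤ n := Nat.lt_succ_iff.mp (mem_range.mp hi)
            rw [ih (n - i) (by omega), Nat.add_sub_cancel,
              ← choose_mul_factorial_mul_factorial hi]
            push_cast
            ring
        _ = (n + 1)! * a (n + 1) := by
            rw [← mul_sum, ← hrec', factorial_succ]
            push_cast
            ring

theorem sum_Ioc_sum_divisorsAntidiagonal {M : Type*} [AddCommMonoid M] (f : ℕ × ℕ → M)
    (N : ℕ) :
    ∑ n ∈ Ioc 0 N, ∑ x ∈ n.divisorsAntidiagonal, f x =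
      ∑ x ∈ Ioc 0 N ×ˢ Ioc 0 N with x.1 * x.2 ≤ N, f x := by
  calc ∑ n ∈ Ioc 0 N, ∑ x ∈ n.divisorsAntidiagonal, f x
      = ∑ n ∈ Ioc 0 N, ∑ x ∈ Ioc 0 N ×ˢ Ioc 0 N with x.1 * x.2 = n, f x :=
        sum_congr rfl fun n hn => by
          rw [divisorsAntidiagonal_eq_prod_filter_of_le (mem_Ioc.1 hn).1.ne' (mem_Ioc.1 hn).2]
    _ = _ := by
        simp_rw [sum_filter]
        rw [sum_comm]
        exact sum_congr rfl fun _ _ => by simp_all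

namespace Nat.Partition

lemma sum_count_mul_self {n : ℕ} (p : n.Partition) :
    ∑ d ∈ Ioc 0 n, p.parts.count d * d = n := by
  have hsub : p.parts.toFinset ⊆ Ioc 0 n := fun i hi => by
    rw [Multiset.mem_toFinset] at hi
    exact mem_Ioc.2 ⟨p.parts_pos hi, p.le_of_mem_parts hi⟩
  simp_rw [← smul_eq_mul, ← sum_multiset_count_of_subset _ _ hsub, p.parts_sum]

lemma mul_le_of_le_count {n d k : ℕ} (p : n.Partition) (h : k ≤ p.parts.count d) :
    d * k ≤ n := by
  obtain ⟨u, hu⟩ := Multiset.le_iff_exists_add.mp (Multiset.le_count_iff_replicate_le.mp h)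
  have hsum := congrArg Multiset.sum hu
  rw [Multiset.sum_add, Multiset.sum_replicate, p.parts_sum, smul_eq_mul] at hsum
  rw [mul_comm]
  omega

end Nat.Partition

def restrictedDivisorSum (P : ℕ → Prop) [DecidablePred P] (n : ℕ) : ℕ :=
  ∑ d ∈ n.divisors, if P d then d else 0

section RestrictedPartitions

variable (P : ℕ → Prop) [DecidablePred P]

lemma restrictedPartitionCount_zero : restrictedPartitionCount P 0 = 1 :=
  Fintype.card_eq_one_iff.mpr
    ⟨⟨default, by simp⟩, fun _ => Subtype.ext (Subsingleton.elim _ _)⟩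

lemma restrictedPartitionCount_eq_card_restricted (n : ℕ) :
    restrictedPartitionCount P n = #(Nat.Partition.restricted n P) :=
  Fintype.card_subtype _

def addReplicateEquiv {n d k : ℕ} (hd : 0 < d) (hPd : P d) :
    {p : n.Partition // ∀ i ∈ p.parts, P i} ≃
      {p : (n + d * k).Partition // (∀ i ∈ p.parts, P i) ∧ k ≤ p.parts.count d} where
  toFun q :=
    ⟨⟨q.1.parts + Multiset.replicate k d,
        fun hi => (Multiset.mem_add.mp hi).elim q.1.parts_pos
          fun h => Multiset.eq_of_mem_replicate h ▸ hd,
        by rw [Multiset.sum_add, Multiset.sum_replicate, q.1.parts_sum, smul_eq_mul, mul_comm]⟩,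
      fun i hi => (Multiset.mem_add.mp hi).elim (q.2 i)
        fun h => Multiset.eq_of_mem_replicate h ▸ hPd,
      by rw [Multiset.count_add, Multiset.count_replicate_self]; exact le_add_self⟩
  invFun p :=
    ⟨⟨p.1.parts - Multiset.replicate k d,
        fun hi => p.1.parts_pos (Multiset.mem_of_le tsub_le_self hi),
        by
          have h := congrArg Multiset.sum
            (tsub_add_cancel_of_le (Multiset.le_count_iff_replicate_le.mp p.2.2))
          rw [Multiset.sum_add, Multiset.sum_replicate, p.1.parts_sum, smul_eq_mul,
            mul_comm k d] at h
          omega⟩,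
      fun i hi => p.2.1 i (Multiset.mem_of_le tsub_le_self hi)⟩
  left_inv q := Subtype.ext <| Nat.Partition.ext <| add_tsub_cancel_right _ _
  right_inv p := Subtype.ext <| Nat.Partition.ext <|
    tsub_add_cancel_of_le (Multiset.le_count_iff_replicate_le.mp p.2.2)

lemma card_restricted_filter_le_count {n d : ℕ} (k : ℕ) (hd : 0 < d) (hPd : P d) :
    #{p ∈ Nat.Partition.restricted n P | k ≤ p.parts.count d} =
      if d * k ≤ n then restrictedPartitionCount P (n - d * k) else 0 := by
  rw [Nat.Partition.restricted, filter_filter, ← Fintype.card_subtype]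
  split_ifs with h
  · obtain ⟨m, rfl⟩ := Nat.exists_eq_add_of_le' h
    rw [Nat.add_sub_cancel]
    exact (Fintype.card_congr (addReplicateEquiv P hd hPd)).symm
  · exact Fintype.card_eq_zero_iff.mpr ⟨fun p => h (p.1.mul_le_of_le_count p.2.2)⟩

lemma sum_count_restricted {n d : ℕ} (hd : 0 < d) (hPd : P d) :
    ∑ p ∈ Nat.Partition.restricted n P, p.parts.count d =
      ∑ k ∈ Ioc 0 n, if d * k ≤ n then restrictedPartitionCount P (n - d * k) else 0 := by
  have layer_cake : ∀ p : n.Partition,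
      p.parts.count d = ∑ k ∈ Ioc 0 n, if k ≤ p.parts.count d then 1 else 0 := fun p => by
    have hle : p.parts.count d ≤ n :=
      (Nat.le_mul_of_pos_left _ hd).trans (p.mul_le_of_le_count le_rfl)
    have hfilter : {k ∈ Ioc 0 n | k ≤ p.parts.count d} = Ioc 0 (p.parts.count d) := by
      ext k
      simp only [mem_filter, mem_Ioc]
      omega
    rw [sum_boole, Nat.cast_id, hfilter, Nat.card_Ioc, Nat.sub_zero]
  simp_rw [← card_restricted_filter_le_count P _ hd hPd, card_filter,
    sum_congr rfl fun p _ => layer_cake p]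
  exact sum_comm

lemma sum_count_restricted_eq_zero {n d : ℕ} (hPd : ¬ P d) :
    ∑ p ∈ Nat.Partition.restricted n P, p.parts.count d = 0 :=
  sum_eq_zero fun _ hp => Multiset.count_eq_zero.mpr fun hd => hPd ((mem_filter.mp hp).2 d hd)

theorem mul_restrictedPartitionCount_eq_sum (n : ℕ) :
    n * restrictedPartitionCount P n =
      ∑ j ∈ Ioc 0 n, restrictedDivisorSum P j * restrictedPartitionCount P (n - j) := by
  set f : ℕ → ℕ → ℕ := fun d k =>
    (if P d then d else 0) * restrictedPartitionCount P (n - d * k)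
  calc n * restrictedPartitionCount P n
      = ∑ p ∈ Nat.Partition.restricted n P, ∑ d ∈ Ioc 0 n, p.parts.count d * d := by
        rw [restrictedPartitionCount_eq_card_restricted, mul_comm, ← smul_eq_mul, ← sum_const]
        exact sum_congr rfl fun p _ => p.sum_count_mul_self.symm
    _ = ∑ d ∈ Ioc 0 n, (∑ p ∈ Nat.Partition.restricted n P, p.parts.count d) * d := by
        rw [sum_comm]
        simp_rw [sum_mul]
    _ = ∑ d ∈ Ioc 0 n, ∑ k ∈ Ioc 0 n, if d * k ≤ n then f d k else 0 :=
        sum_congr rfl fun d hd => by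
          by_cases hPd : P d
          · rw [sum_count_restricted P (mem_Ioc.1 hd).1 hPd, sum_mul]
            simp [f, hPd, mul_comm]
          · simp [f, sum_count_restricted_eq_zero P hPd, hPd]
    _ = ∑ x ∈ Ioc 0 n ×ˢ Ioc 0 n with x.1 * x.2 ≤ n, f x.1 x.2 := by
        rw [sum_filter, sum_product]
    _ = ∑ j ∈ Ioc 0 n, ∑ x ∈ j.divisorsAntidiagonal, f x.1 x.2 :=
        (sum_Ioc_sum_divisorsAntidiagonal _ n).symm
    _ = ∑ j ∈ Ioc 0 n, restrictedDivisorSum P j * restrictedPartitionCount P (n - j) :=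
        sum_congr rfl fun j _ => by
          rw [Nat.sum_divisorsAntidiagonal f, restrictedDivisorSum, sum_mul]
          exact sum_congr rfl fun d hd => by
            simp only [f, Nat.mul_div_cancel' (Nat.dvd_of_mem_divisors hd)]

end RestrictedPartitions

theorem bell_complete_eq_partitions_general (m : ℕ) (n : ℕ) :
    bellComplete (fun j => ((j - 1).factorial : ℚ) * sigma' m j) n =
      (n.factorial : ℚ) * pm m n :=
  bellComplete_eq_factorial_mul (s := fun j => (sigma' m j : ℚ)) (a := fun n => (pm m n : ℚ))
    (by simp [pm, restrictedPartitionCount_zero])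
    (fun n => by exact_mod_cast mul_restrictedPartitionCount_eq_sum _ n) n

theorem bell_complete_eq_partitions (m : ℕ) (hm : 3 ≤ m) (n : ℕ) (hn : 1 ≤ n) :
    bellComplete (fun j => ((j - 1).factorial : ℚ) * sigma' m j) n =
      (n.factorial : ℚ) * pm m n :=
  bell_complete_eq_partitions_general m n
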